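/- arXiv:2106.02264 — 5 statements merged into one kernel-verified Lean document; each statement's English description precedes it below -/
import Mathlib

section
/- Fix K ∈ ℕ, a sample x⁰ ∈ (Fin K → Bool), and β ∈ ℝ, and define the softened weight of x ∈ (Fin K → Bool) by w(x) := Π_{k : Fin K} (β if x k = x⁰ k, else 1−β). Let I, J ⊆ Fin K be disjoint sets of coordinates, and let A, B ⊆ (Fin K → Bool) be sets such that membership in A depends only on the coordinates in I (if x and x' agree on all coordinates in I, then x ∈ A ↔ x' ∈ A) and membership in B depends only on the coordinates in J. Then Σ_{x ∈ A ∩ B} w(x) = ( Σ_{x ∈ A} w(x) ) · ( Σ_{x ∈ B} w(x) ). -/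
/-!
Read β and 1 - β as (possibly signed) masses on `Bool`; `w` is then the product weight
on `Fin K → Bool`, of total mass `∏ k, (β + (1 - β)) = 1`. Exchanging the coordinates in `I`
of a pair `(x, y)` is a bijection that preserves `w x * w y` and maps `A × B` onto
`(A ∩ B) × univ`, so `(∑_A w) (∑_B w) = (∑_{A ∩ B} w) (∑ w) = ∑_{A ∩ B} w`.
-/

open Finset

section ProductWeight

variable {ι R : Type*} [DecidableEq ι] {α : ι → Type*}

def piecewiseSwap (s : Finset ι) : Equiv.Perm ((∀ i, α i) × (∀ i, α i)) :=
  Function.Involutive.toPerm (fun p => (s.piecewise p.1 p.2, s.piecewise p.2 p.1)) fun p => by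
    ext i <;> by_cases hi : i ∈ s <;> simp [hi]

@[simp]
lemma piecewiseSwap_apply (s : Finset ι) (p : (∀ i, α i) × (∀ i, α i)) :
    piecewiseSwap s p = (s.piecewise p.1 p.2, s.piecewise p.2 p.1) :=
  rfl

lemma prod_piecewiseSwap_mul_prod [Fintype ι] [CommMonoid R] (g : ∀ i, α i → R)
    (s : Finset ι) (p : (∀ i, α i) × (∀ i, α i)) :
    (∏ i, g i ((piecewiseSwap s p).1 i)) * ∏ i, g i ((piecewiseSwap s p).2 i) =
      (∏ i, g i (p.1 i)) * ∏ i, g i (p.2 i) := by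
  simp only [← prod_mul_distrib]
  refine prod_congr rfl fun i _ => ?_
  by_cases hi : i ∈ s <;> simp [hi, mul_comm]

lemma sum_prod_eq_one [Fintype ι] [∀ i, Fintype (α i)] [CommSemiring R] {g : ∀ i, α i → R}
    (hg : ∀ i, ∑ a, g i a = 1) :
    ∑ x : ∀ i, α i, ∏ i, g i (x i) = 1 := by
  rw [← Fintype.prod_sum, Fintype.prod_eq_one _ hg]

theorem sum_inter_eq_sum_mul_sum_of_dependsOn [Fintype ι] [∀ i, Fintype (α i)]
    [∀ i, DecidableEq (α i)] [CommSemiring R] {g : ∀ i, α i → R}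
    (hg : ∀ i, ∑ a, g i a = 1) {s : Finset ι} {A B : Finset (∀ i, α i)}
    (hA : DependsOn (· ∈ A) (s : Set ι)) (hB : DependsOn (· ∈ B) (s : Set ι)ᶜ) :
    ∑ x ∈ A ∩ B, ∏ i, g i (x i) =
      (∑ x ∈ A, ∏ i, g i (x i)) * ∑ x ∈ B, ∏ i, g i (x i) := by
  have mem_iff (p : (∀ i, α i) × (∀ i, α i)) :
      p ∈ A ×ˢ B ↔ piecewiseSwap s p ∈ (A ∩ B) ×ˢ univ := by
    have hpA : (s.piecewise p.1 p.2 ∈ A) = (p.1 ∈ A) :=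
      hA fun i hi => piecewise_eq_of_mem _ _ _ (mem_coe.mp hi)
    have hpB : (s.piecewise p.1 p.2 ∈ B) = (p.2 ∈ B) :=
      hB fun i hi => piecewise_eq_of_notMem _ _ _ hi
    simp [hpA, hpB]
  symm
  calc (∑ x ∈ A, ∏ i, g i (x i)) * ∑ y ∈ B, ∏ i, g i (y i)
      = ∑ p ∈ A ×ˢ B, (∏ i, g i (p.1 i)) * ∏ i, g i (p.2 i) := by
        rw [sum_mul_sum, sum_product]
    _ = ∑ p ∈ (A ∩ B) ×ˢ (univ : Finset (∀ i, α i)),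
          (∏ i, g i (p.1 i)) * ∏ i, g i (p.2 i) :=
        sum_equiv (piecewiseSwap s) mem_iff fun p _ => (prod_piecewiseSwap_mul_prod g s p).symm
    _ = ∑ x ∈ A ∩ B, ∏ i, g i (x i) := by
        rw [sum_product]
        simp only [← mul_sum, sum_prod_eq_one hg, mul_one]

end ProductWeight

/-- Product factorization of the softened weight over sets depending on disjoint
    coordinate sets: Σ_{x ∈ A ∩ B} w(x) = (Σ_{x ∈ A} w(x)) · (Σ_{x ∈ B} w(x)). -/
theorem stmt_3 {K : ℕ} (x0 : Fin K → Bool) (β : ℝ)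
    (w : (Fin K → Bool) → ℝ)
    (hw : ∀ x, w x = ∏ k, if x k = x0 k then β else 1 - β)
    (I J : Finset (Fin K)) (hIJ : Disjoint I J)
    (A B : Finset (Fin K → Bool))
    (hA : ∀ x x', (∀ k ∈ I, x k = x' k) → (x ∈ A ↔ x' ∈ A))
    (hB : ∀ x x', (∀ k ∈ J, x k = x' k) → (x ∈ B ↔ x' ∈ B)) :
    ∑ x ∈ A ∩ B, w x = (∑ x ∈ A, w x) * (∑ x ∈ B, w x) := by
  have total_mass (k : Fin K) : ∑ b, (if b = x0 k then β else 1 - β) = 1 := by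
    cases x0 k <;> simp
  have hJ : (J : Set (Fin K)) ⊆ (I : Set (Fin K))ᶜ := by
    simpa [Set.subset_compl_iff_disjoint_left, disjoint_comm] using hIJ
  simp only [hw]
  exact sum_inter_eq_sum_mul_sum_of_dependsOn total_mass
    (fun x x' h => propext (hA x x' h)) (DependsOn.mono hJ fun x x' h => propext (hB x x' h))
end

section
/- Let n ≥ 1, let k_1, …, k_n be positive integers with Σ_{i=1}^n k_i = 2c for a natural number c, let m ≥ 0 be real, and for S ⊆ Fin n define weight(S) := −m/2 − m·c + m·Σ_{i∈S} k_i. Let σ(t) := 1/(1 + exp(−t)). If S satisfies Σ_{i∈S} k_i ≠ c, then one of weight(S), weight(Sᶜ) is ≥ m/2 and the other is ≤ −3m/2, and consequently σ(m/2) ≤ σ(weight(S)) + σ(weight(Sᶜ)) ≤ 1 + σ(−3m/2). -/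
/-!
Write `s` and `t` for the sums of the `k i` over `S` and over `Sᶜ`, so that `s + t = 2c` and
`weight S = m (s - c) - m/2`, `weight Sᶜ = m (t - c) - m/2`. Since the `k i` are integers, `s ≠ c`
forces one of `s, t` to be at least `c + 1` and the other at most `c - 1`, which gives the two
bounds on the weights. The sigmoid bounds then follow from monotonicity of the sigmoid and
`0 ≤ σ ≤ 1` applied to the other summand.
-/

open Finset Real

namespace Real

lemma sigmoid_le_sigmoid_add_sigmoid {u a : ℝ} (b : ℝ) (ha : u ≤ a) :
    sigmoid u ≤ sigmoid a + sigmoid b := by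
  linarith [sigmoid_le ha, sigmoid_nonneg b]

lemma sigmoid_add_sigmoid_le_one_add (a : ℝ) {b v : ℝ} (hb : b ≤ v) :
    sigmoid a + sigmoid b ≤ 1 + sigmoid v := by
  linarith [sigmoid_le hb, sigmoid_le_one a]

end Real

noncomputable def partitionWeight (m : ℝ) (c x : ℕ) : ℝ := -m / 2 - m * c + m * x

lemma partitionWeight_bounds_of_lt {m : ℝ} (hm : 0 ≤ m) {s t c : ℕ} (hst : s + t = 2 * c)
    (hs : c < s) :
    m / 2 ≤ partitionWeight m c s ∧ partitionWeight m c t ≤ -(3 * m) / 2 := by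
  have hs' : (c : ℝ) + 1 ≤ s := by exact_mod_cast hs
  have hst' : (s : ℝ) + t = 2 * c := by exact_mod_cast hst
  unfold partitionWeight
  constructor <;> nlinarith

theorem stmt_8_general {n : ℕ} (k : Fin n → ℕ) (c : ℕ)
    (hsum : ∑ i, k i = 2 * c)
    (m : ℝ) (hm : 0 ≤ m)
    (weight : Finset (Fin n) → ℝ)
    (hweight : ∀ S, weight S = -m / 2 - m * c + m * ∑ i ∈ S, (k i : ℝ))
    (σ : ℝ → ℝ) (hσ : ∀ t, σ t = 1 / (1 + Real.exp (-t)))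
    (S : Finset (Fin n)) (hS : ∑ i ∈ S, k i ≠ c) :
    ((m / 2 ≤ weight S ∧ weight Sᶜ ≤ -(3 * m) / 2) ∨
      (m / 2 ≤ weight Sᶜ ∧ weight S ≤ -(3 * m) / 2)) ∧
    σ (m / 2) ≤ σ (weight S) + σ (weight Sᶜ) ∧
    σ (weight S) + σ (weight Sᶜ) ≤ 1 + σ (-(3 * m) / 2) := by
  obtain rfl : σ = sigmoid := funext fun t ↦ by rw [hσ, sigmoid_def, one_div]
  have hsplit : ∑ i ∈ S, k i + ∑ i ∈ Sᶜ, k i = 2 * c := by rw [sum_add_sum_compl, hsum]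
  have hw : ∀ T, weight T = partitionWeight m c (∑ i ∈ T, k i) := fun T ↦ by
    rw [hweight, partitionWeight, Nat.cast_sum]
  rw [hw, hw]
  rcases hS.lt_or_gt with hlt | hgt
  · obtain ⟨hup, hlow⟩ :=
      partitionWeight_bounds_of_lt hm ((add_comm _ _).trans hsplit) (by omega : c < ∑ i ∈ Sᶜ, k i)
    refine ⟨Or.inr ⟨hup, hlow⟩, ?_, ?_⟩ <;> rw [add_comm]
    exacts [sigmoid_le_sigmoid_add_sigmoid _ hup, sigmoid_add_sigmoid_le_one_add _ hlow]
  · obtain ⟨hup, hlow⟩ := partitionWeight_bounds_of_lt hm hsplit hgt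
    exact ⟨Or.inl ⟨hup, hlow⟩, sigmoid_le_sigmoid_add_sigmoid _ hup,
      sigmoid_add_sigmoid_le_one_add _ hlow⟩

/-- For a subset not solving the partition instance, one of weight(S), weight(Sᶜ) is
    ≥ m/2 and the other is ≤ −3m/2, whence σ(m/2) ≤ σ(weight S) + σ(weight Sᶜ) ≤ 1 + σ(−3m/2). -/
theorem stmt_8 {n : ℕ} (hn : 1 ≤ n) (k : Fin n → ℕ) (c : ℕ)
    (hk_pos : ∀ i, 0 < k i) (hsum : ∑ i, k i = 2 * c)
    (m : ℝ) (hm : 0 ≤ m)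
    (weight : Finset (Fin n) → ℝ)
    (hweight : ∀ S, weight S = -m / 2 - m * c + m * ∑ i ∈ S, (k i : ℝ))
    (σ : ℝ → ℝ) (hσ : ∀ t, σ t = 1 / (1 + Real.exp (-t)))
    (S : Finset (Fin n)) (hS : ∑ i ∈ S, k i ≠ c) :
    ((m / 2 ≤ weight S ∧ weight Sᶜ ≤ -(3 * m) / 2) ∨
      (m / 2 ≤ weight Sᶜ ∧ weight S ≤ -(3 * m) / 2)) ∧
    σ (m / 2) ≤ σ (weight S) + σ (weight Sᶜ) ∧
    σ (weight S) + σ (weight Sᶜ) ≤ 1 + σ (-(3 * m) / 2) :=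
  stmt_8_general k c hsum m hm weight hweight σ hσ S hS
end

section
/- Let n ≥ 1, let k_1, …, k_n be positive integers with Σ_{i=1}^n k_i = 2c for a natural number c, let m > 0 be real, and for S ⊆ Fin n define weight(S) := −m/2 − m·c + m·Σ_{i∈S} k_i. Let σ(t) := 1/(1 + exp(−t)), let P := { S ⊆ Fin n : Σ_{i∈S} k_i = c }, and suppose ε > 0 satisfies 2·σ(−m/2) < ε and 1 − σ(m/2) < ε. Then ((2^n − |P|)/2)·(1−ε) ≤ Σ_{S ⊆ Fin n} σ(weight(S)) ≤ (|P|/2)·ε + ((2^n − |P|)/2)·(1+ε). -/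
/-!
Pair each `S` with its complement. Since `∑_S k + ∑_{Sᶜ} k = 2c`, either both sums equal `c`, and
then both weights are `-m/2`, or one sum is at most `c - 1` and the other at least `c + 1`, and then
one weight is `≤ -m/2` and the other `≥ m/2`. So a complementary pair contributes at most
`2σ(-m/2) < ε` when `S ∈ P`, and between `σ(m/2) > 1 - ε` and `1 + σ(-m/2) < 1 + ε` otherwise;
summing over all `S` counts every pair twice.
-/

open Finset Real

theorem sum_ite_mem_const {α R : Type*} [Fintype α] [DecidableEq α] [Ring R]
    (P : Finset α) (a b : R) :
    ∑ x, (if x ∈ P then a else b) = #P * a + (Fintype.card α - #P) * b := by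
  rw [Finset.sum_ite, filter_mem_eq_inter, univ_inter, filter_not, filter_mem_eq_inter, univ_inter,
    ← compl_eq_univ_sdiff, sum_const, sum_const, card_compl, nsmul_eq_mul, nsmul_eq_mul,
    Nat.cast_sub P.card_le_univ]

theorem sigmoid_pair_bounds_of_ne {m : ℝ} (hm : 0 ≤ m) {a b c : ℤ} (hab : a + b = 2 * c)
    (hac : a ≠ c) :
    sigmoid (m / 2) ≤ sigmoid (-m / 2 - m * c + m * a) + sigmoid (-m / 2 - m * c + m * b) ∧
      sigmoid (-m / 2 - m * c + m * a) + sigmoid (-m / 2 - m * c + m * b) ≤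
        1 + sigmoid (-m / 2) := by
  wlog hlt : a < c generalizing a b
  · rw [add_comm (sigmoid _)]
    exact this (by omega) (by omega) (by omega)
  have hlow : m / 2 ≤ -m / 2 - m * c + m * b := by
    have : (c : ℝ) + 1 ≤ b := by exact_mod_cast (by omega : c + 1 ≤ b)
    nlinarith
  have hhigh : -m / 2 - m * c + m * a ≤ -m / 2 := by
    have : (a : ℝ) ≤ c := by exact_mod_cast hlt.le
    nlinarith
  constructor
  · linarith [sigmoid_le hlow, sigmoid_nonneg (-m / 2 - m * c + m * a)]
  · linarith [sigmoid_le hhigh, sigmoid_le_one (-m / 2 - m * c + m * b)]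

theorem stmt_9_general {n : ℕ} (k : Fin n → ℕ) (c : ℕ)
    (hsum : ∑ i, k i = 2 * c)
    (m : ℝ) (hm : 0 < m)
    (weight : Finset (Fin n) → ℝ)
    (hweight : ∀ S, weight S = -m / 2 - m * c + m * ∑ i ∈ S, (k i : ℝ))
    (σ : ℝ → ℝ) (hσ : ∀ t, σ t = 1 / (1 + Real.exp (-t)))
    (P : Finset (Finset (Fin n)))
    (hP : P = Finset.univ.filter (fun S : Finset (Fin n) => ∑ i ∈ S, k i = c))
    (ε : ℝ)
    (hε1 : 2 * σ (-m / 2) < ε) (hε2 : 1 - σ (m / 2) < ε) :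
    ((2 ^ n - (P.card : ℝ)) / 2) * (1 - ε) ≤ ∑ S : Finset (Fin n), σ (weight S) ∧
    ∑ S : Finset (Fin n), σ (weight S) ≤
      ((P.card : ℝ) / 2) * ε + ((2 ^ n - (P.card : ℝ)) / 2) * (1 + ε) := by
  obtain rfl : σ = sigmoid := funext fun t => by rw [hσ, sigmoid_def, one_div]
  have hpair : ∀ S : Finset (Fin n),
      (if S ∈ P then 0 else 1 - ε) ≤ sigmoid (weight S) + sigmoid (weight Sᶜ) ∧
        sigmoid (weight S) + sigmoid (weight Sᶜ) ≤ (if S ∈ P then ε else 1 + ε) := by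
    intro S
    have hcompl : ∑ i ∈ S, k i + ∑ i ∈ Sᶜ, k i = 2 * c := (sum_add_sum_compl S k).trans hsum
    split_ifs with hS
    · have hSc : ∑ i ∈ S, k i = c := by simpa [hP] using hS
      have hw : ∀ T, ∑ i ∈ T, k i = c → weight T = -m / 2 := fun T hT => by
        rw [hweight, ← Nat.cast_sum, hT]; ring
      rw [hw S hSc, hw Sᶜ (by omega)]
      constructor <;> linarith [sigmoid_pos (-m / 2)]
    · have hSc : ∑ i ∈ S, k i ≠ c := by simpa [hP] using hS
      have hbounds := sigmoid_pair_bounds_of_ne hm.le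
        (a := ∑ i ∈ S, k i) (b := ∑ i ∈ Sᶜ, k i) (c := c)
        (by exact_mod_cast hcompl) (by exact_mod_cast hSc)
      push_cast at hbounds
      rw [hweight, hweight]
      constructor <;> linarith
  have hdouble :
      2 * ∑ S, sigmoid (weight S) = ∑ S, (sigmoid (weight S) + sigmoid (weight Sᶜ)) := by
    rw [sum_add_distrib, compl_involutive.bijective.sum_comp (fun S => sigmoid (weight S)), two_mul]
  have hlow := sum_le_sum fun S (_ : S ∈ univ) => (hpair S).1
  have hhigh := sum_le_sum fun S (_ : S ∈ univ) => (hpair S).2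
  rw [sum_ite_mem_const, ← hdouble, Fintype.card_finset, Fintype.card_fin] at hlow hhigh
  push_cast at hlow hhigh
  constructor <;> linarith

/-- Sandwich bound on the total sigmoid mass Σ_S σ(weight(S)) in terms of |P|. -/
theorem stmt_9 {n : ℕ} (hn : 1 ≤ n) (k : Fin n → ℕ) (c : ℕ)
    (hk_pos : ∀ i, 0 < k i) (hsum : ∑ i, k i = 2 * c)
    (m : ℝ) (hm : 0 < m)
    (weight : Finset (Fin n) → ℝ)
    (hweight : ∀ S, weight S = -m / 2 - m * c + m * ∑ i ∈ S, (k i : ℝ))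
    (σ : ℝ → ℝ) (hσ : ∀ t, σ t = 1 / (1 + Real.exp (-t)))
    (P : Finset (Finset (Fin n)))
    (hP : P = Finset.univ.filter (fun S : Finset (Fin n) => ∑ i ∈ S, k i = c))
    (ε : ℝ) (hε : 0 < ε)
    (hε1 : 2 * σ (-m / 2) < ε) (hε2 : 1 - σ (m / 2) < ε) :
    ((2 ^ n - (P.card : ℝ)) / 2) * (1 - ε) ≤ ∑ S : Finset (Fin n), σ (weight S) ∧
    ∑ S : Finset (Fin n), σ (weight S) ≤
      ((P.card : ℝ) / 2) * ε + ((2 ^ n - (P.card : ℝ)) / 2) * (1 + ε) :=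
  stmt_9_general k c hsum m hm weight hweight σ hσ P hP ε hε1 hε2
end

section
/- Under the setting of the previous bound — n ≥ 1, positive integers k_1,…,k_n with Σ k_i = 2c, m > 0, weight(S) := −m/2 − m·c + m·Σ_{i∈S} k_i, σ(t) := 1/(1+exp(−t)), P := { S ⊆ Fin n : Σ_{i∈S} k_i = c }, and 0 < ε < 1 with 2σ(−m/2) < ε and 1 − σ(m/2) < ε — let Z := Σ_{S ⊆ Fin n} σ(weight(S)). Then 2^n − 2Z/(1−ε) ≤ |P| ≤ 2^n·(1+ε) − 2Z. -/
/-!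
Pair every `S` with its complement: the pair masses `σ (weight S) + σ (weight Sᶜ)` add up to `2 Z`.
Writing `weight S = m d - m/2` with the integer `d = Σ_{i∈S} k_i - c`, the complement has distance
`-d`. A subset in `P` (`d = 0`) contributes `2 σ(-m/2) < ε`; any other subset has `|d| ≥ 1`, so one
of its two weights is `≥ m/2` and the other `≤ -m/2`, and its pair mass lies within `ε` of `1`.
Hence `2 Z` is, up to `ε`, the number of subsets outside `P`, namely `2^n - |P|`.
-/

open Finset Real

section Counting

variable {β : Type*} [Fintype β] (p : β → Prop) [DecidablePred p] {g : β → ℝ} {ε : ℝ}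

theorem card_sub_sum_div_le_card_filter (hε : ε < 1) (hp : ∀ b, p b → 0 ≤ g b)
    (hnp : ∀ b, ¬ p b → 1 - ε ≤ g b) :
    (Fintype.card β : ℝ) - (∑ b, g b) / (1 - ε) ≤ #{b | p b} := by
  have hcard : (#{b | p b} : ℝ) + #{b | ¬ p b} = Fintype.card β := by
    exact_mod_cast card_filter_add_card_filter_not (s := univ) p
  have hP : 0 ≤ ∑ b ∈ {b | p b}, g b := sum_nonneg fun b hb => hp b (mem_filter.1 hb).2
  have hQ : #{b | ¬ p b} • (1 - ε) ≤ ∑ b ∈ {b | ¬ p b}, g b :=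
    card_nsmul_le_sum _ _ _ fun b hb => hnp b (mem_filter.1 hb).2
  rw [nsmul_eq_mul] at hQ
  rw [sub_le_comm, le_div_iff₀ (sub_pos.2 hε), ← hcard, add_sub_cancel_left,
    ← sum_filter_add_sum_filter_not univ p]
  linarith

theorem card_filter_le_card_mul_sub_sum (hp : ∀ b, p b → g b ≤ ε)
    (hnp : ∀ b, ¬ p b → g b ≤ 1 + ε) :
    (#{b | p b} : ℝ) ≤ Fintype.card β * (1 + ε) - ∑ b, g b := by
  have hcard : (#{b | p b} : ℝ) + #{b | ¬ p b} = Fintype.card β := by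
    exact_mod_cast card_filter_add_card_filter_not (s := univ) p
  have hP : ∑ b ∈ {b | p b}, g b ≤ #{b | p b} • ε :=
    sum_le_card_nsmul _ _ _ fun b hb => hp b (mem_filter.1 hb).2
  have hQ : ∑ b ∈ {b | ¬ p b}, g b ≤ #{b | ¬ p b} • (1 + ε) :=
    sum_le_card_nsmul _ _ _ fun b hb => hnp b (mem_filter.1 hb).2
  rw [nsmul_eq_mul] at hP hQ
  rw [← sum_filter_add_sum_filter_not univ p, ← hcard]
  linarith

end Counting

theorem sum_add_apply_compl {β M : Type*} [Fintype β] [BooleanAlgebra β] [NonAssocSemiring M]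
    (f : β → M) : ∑ x, (f x + f xᶜ) = 2 * ∑ x, f x := by
  rw [sum_add_distrib, two_mul,
    Fintype.sum_equiv (compl_involutive.toPerm _) (fun x => f xᶜ) f fun _ => rfl]

theorem sigmoid_add_sigmoid_mem_Icc {m x : ℝ} (hm : 0 ≤ m) (hx : 1 ≤ |x|) :
    sigmoid (m * x - m / 2) + sigmoid (-(m * x) - m / 2) ∈
      Set.Icc (sigmoid (m / 2)) (1 + sigmoid (-m / 2)) := by
  have key : ∀ a b : ℝ, m / 2 ≤ a → b ≤ -m / 2 →
      sigmoid a + sigmoid b ∈ Set.Icc (sigmoid (m / 2)) (1 + sigmoid (-m / 2)) := fun a b ha hb =>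
    ⟨by linarith [sigmoid_le ha, sigmoid_pos b], by linarith [sigmoid_le hb, sigmoid_lt_one a]⟩
  rcases le_abs'.1 hx with hx | hx
  · rw [add_comm (sigmoid _)]
    exact key (-(m * x) - m / 2) (m * x - m / 2) (by nlinarith) (by nlinarith)
  · exact key (m * x - m / 2) (-(m * x) - m / 2) (by nlinarith) (by nlinarith)

theorem sigmoid_weight_add_sigmoid_weight_compl {α : Type*} [Fintype α] [DecidableEq α]
    {k : α → ℕ} {c : ℕ} (hsum : ∑ i, k i = 2 * c) {m : ℝ} {weight : Finset α → ℝ}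
    (hweight : ∀ S, weight S = -m / 2 - m * c + m * ∑ i ∈ S, (k i : ℝ)) (S : Finset α) :
    sigmoid (weight S) + sigmoid (weight Sᶜ) =
      sigmoid (m * (∑ i ∈ S, (k i : ℝ) - c) - m / 2) +
        sigmoid (-(m * (∑ i ∈ S, (k i : ℝ) - c)) - m / 2) := by
  have hsumℝ : ∑ i ∈ Sᶜ, (k i : ℝ) + ∑ i ∈ S, (k i : ℝ) = 2 * c := by
    rw [sum_compl_add_sum]; exact_mod_cast hsum
  rw [hweight, hweight, show ∑ i ∈ Sᶜ, (k i : ℝ) = 2 * c - ∑ i ∈ S, (k i : ℝ) by linarith]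
  ring_nf

theorem stmt_10_general {n : ℕ} (k : Fin n → ℕ) (c : ℕ)
    (hsum : ∑ i, k i = 2 * c)
    (m : ℝ) (hm : 0 < m)
    (weight : Finset (Fin n) → ℝ)
    (hweight : ∀ S, weight S = -m / 2 - m * c + m * ∑ i ∈ S, (k i : ℝ))
    (σ : ℝ → ℝ) (hσ : ∀ t, σ t = 1 / (1 + Real.exp (-t)))
    (P : Finset (Finset (Fin n)))
    (hP : P = Finset.univ.filter (fun S : Finset (Fin n) => ∑ i ∈ S, k i = c))
    (ε : ℝ) (hε1 : ε < 1)
    (hεa : 2 * σ (-m / 2) < ε) (hεb : 1 - σ (m / 2) < ε)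
    (Z : ℝ) (hZ : Z = ∑ S : Finset (Fin n), σ (weight S)) :
    (2 : ℝ) ^ n - 2 * Z / (1 - ε) ≤ (P.card : ℝ) ∧
      (P.card : ℝ) ≤ (2 : ℝ) ^ n * (1 + ε) - 2 * Z := by
  obtain rfl : σ = sigmoid := funext fun t => by rw [hσ, one_div, sigmoid_def]
  have hP_mass : ∀ S : Finset (Fin n), ∑ i ∈ S, k i = c →
      sigmoid (weight S) + sigmoid (weight Sᶜ) = 2 * sigmoid (-m / 2) := fun S hS => by
    have hSℝ : ∑ i ∈ S, (k i : ℝ) = c := by exact_mod_cast hS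
    rw [sigmoid_weight_add_sigmoid_weight_compl hsum hweight, hSℝ]
    ring_nf
  have hQ_mass : ∀ S : Finset (Fin n), ¬ ∑ i ∈ S, k i = c →
      sigmoid (weight S) + sigmoid (weight Sᶜ) ∈ Set.Icc (sigmoid (m / 2)) (1 + sigmoid (-m / 2)) :=
    fun S hS => by
      have hd : (1 : ℝ) ≤ |∑ i ∈ S, (k i : ℝ) - c| := by
        have := Int.one_le_abs (sub_ne_zero.2 (Int.natCast_inj.not.2 hS))
        exact_mod_cast this
      rw [sigmoid_weight_add_sigmoid_weight_compl hsum hweight]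
      exact sigmoid_add_sigmoid_mem_Icc hm.le hd
  have h2Z : ∑ S, (sigmoid (weight S) + sigmoid (weight Sᶜ)) = 2 * Z := by
    rw [hZ]; exact sum_add_apply_compl _
  have hcard : (Fintype.card (Finset (Fin n)) : ℝ) = 2 ^ n := by simp [Fintype.card_finset]
  rw [hP, ← h2Z, ← hcard]
  constructor
  · refine card_sub_sum_div_le_card_filter _ hε1 (fun S hS => ?_) (fun S hS => ?_)
    · rw [hP_mass S hS]; linarith [sigmoid_pos (-m / 2)]
    · linarith [(hQ_mass S hS).1]
  · refine card_filter_le_card_mul_sub_sum _ (fun S hS => ?_) (fun S hS => ?_)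
    · rw [hP_mass S hS]; linarith
    · linarith [(hQ_mass S hS).2, sigmoid_pos (-m / 2)]

/-- Explicit lower and upper bounds on |P| in terms of the total sigmoid mass Z. -/
theorem stmt_10 {n : ℕ} (hn : 1 ≤ n) (k : Fin n → ℕ) (c : ℕ)
    (hk_pos : ∀ i, 0 < k i) (hsum : ∑ i, k i = 2 * c)
    (m : ℝ) (hm : 0 < m)
    (weight : Finset (Fin n) → ℝ)
    (hweight : ∀ S, weight S = -m / 2 - m * c + m * ∑ i ∈ S, (k i : ℝ))
    (σ : ℝ → ℝ) (hσ : ∀ t, σ t = 1 / (1 + Real.exp (-t)))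
    (P : Finset (Finset (Fin n)))
    (hP : P = Finset.univ.filter (fun S : Finset (Fin n) => ∑ i ∈ S, k i = c))
    (ε : ℝ) (hε0 : 0 < ε) (hε1 : ε < 1)
    (hεa : 2 * σ (-m / 2) < ε) (hεb : 1 - σ (m / 2) < ε)
    (Z : ℝ) (hZ : Z = ∑ S : Finset (Fin n), σ (weight S)) :
    (2 : ℝ) ^ n - 2 * Z / (1 - ε) ≤ (P.card : ℝ) ∧
      (P.card : ℝ) ≤ (2 : ℝ) ^ n * (1 + ε) - 2 * Z :=
  stmt_10_general k c hsum m hm weight hweight σ hσ P hP ε hε1 hεa hεb Z hZ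
end

section
/- Let N ≥ 1, let d_i > 0 and γ_i ∈ ℝ for i ∈ Fin N, and let b > 0. Define L(θ) := Σ_i ( d_i·log θ_i − b·θ_i·log θ_i + b·θ_i·γ_i ). Suppose θ* ∈ (Fin N → ℝ) with θ*_i > 0 for all i and Σ_i θ*_i = 1 is a local maximum of L restricted to the hyperplane { θ : Σ_i θ_i = 1 }. Then, setting φ_i := log θ*_i, there exists y ∈ ℝ such that for all i: d_i·exp(−φ_i) − b·φ_i + b·γ_i = y, and Σ_i exp(φ_i) = 1. -/
/-
At an interior point of the simplex, moving mass from coordinate `j` to coordinate `i` keeps the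
constraint `∑ θ = 1`, so the directional derivative of `L` along `eᵢ - eⱼ` vanishes. Since `L` is
a sum of one-variable functions of the coordinates, that derivative is `∂ᵢL - ∂ⱼL`; hence all
partial derivatives `dᵢ/θᵢ - b (log θᵢ + 1) + b γᵢ` are equal, which is Equation (9) once
`1/θᵢ` is written as `exp (-φᵢ)`.
-/

open Filter Topology

theorem IsLocalMaxOn.isLocalMax_comp_line {E : Type*} [TopologicalSpace E] [AddCommGroup E]
    [Module ℝ E] [ContinuousAdd E] [ContinuousSMul ℝ E] {F : E → ℝ} {s : Set E} {x v : E}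
    (h : IsLocalMaxOn F s x) (hline : ∀ t : ℝ, x + t • v ∈ s) :
    IsLocalMax (fun t : ℝ => F (x + t • v)) 0 := by
  have hcont : Continuous fun t : ℝ => x + t • v := by fun_prop
  have hto : Tendsto (fun t : ℝ => x + t • v) (𝓝 0) (𝓝[s] x) :=
    tendsto_nhdsWithin_iff.2 ⟨by simpa using hcont.tendsto 0, Eventually.of_forall hline⟩
  exact IsMaxFilter.comp_tendsto (f := F) (by simpa [IsLocalMaxOn] using h) hto

theorem hasDerivAt_sum_apply_line {ι : Type*} [Fintype ι] {f : ι → ℝ → ℝ} {f' x v : ι → ℝ}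
    (hf : ∀ k, HasDerivAt (f k) (f' k) (x k)) :
    HasDerivAt (fun t : ℝ => ∑ k, f k ((x + t • v) k)) (∑ k, f' k * v k) 0 := by
  refine HasDerivAt.fun_sum fun k _ => ?_
  have hline : HasDerivAt (fun t : ℝ => x k + t * v k) (v k) 0 := by
    simpa using ((hasDerivAt_id (0 : ℝ)).mul_const (v k)).const_add (x k)
  simp only [Pi.add_apply, Pi.smul_apply, smul_eq_mul]
  exact (hf k).comp_of_eq 0 hline (by simp)

theorem IsLocalMaxOn.exists_eq_const_deriv_of_sum_eq_one {ι : Type*} [Fintype ι]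
    [DecidableEq ι] {f : ι → ℝ → ℝ} {f' x : ι → ℝ}
    (hmax : IsLocalMaxOn (fun θ : ι → ℝ => ∑ k, f k (θ k)) {θ | ∑ k, θ k = 1} x)
    (hx : ∑ k, x k = 1) (hf : ∀ k, HasDerivAt (f k) (f' k) (x k)) :
    ∃ y, ∀ i, f' i = y := by
  suffices h : ∀ i j, f' i = f' j by
    rcases isEmpty_or_nonempty ι with hι | ⟨⟨j⟩⟩
    · exact ⟨0, fun i => hι.elim i⟩
    · exact ⟨f' j, fun i => h i j⟩
  intro i j
  set v : ι → ℝ := Pi.single i 1 - Pi.single j 1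
  have hline : ∀ t : ℝ, x + t • v ∈ {θ : ι → ℝ | ∑ k, θ k = 1} := by
    intro t
    simp [v, Finset.sum_add_distrib, ← Finset.mul_sum, Finset.sum_sub_distrib, hx]
  have hderiv : HasDerivAt (fun t : ℝ => ∑ k, f k ((x + t • v) k)) (f' i - f' j) 0 := by
    convert hasDerivAt_sum_apply_line (v := v) hf using 1
    simp [v, mul_sub, Finset.sum_sub_distrib, Pi.single_apply]
  have := hderiv.deriv.symm.trans (hmax.isLocalMax_comp_line hline).deriv_eq_zero
  linarith

theorem hasDerivAt_surrogate_term (d γ b : ℝ) {x : ℝ} (hx : 0 < x) :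
    HasDerivAt (fun u => d * Real.log u - b * u * Real.log u + b * u * γ)
      (d / x - b * (Real.log x + 1) + b * γ) x := by
  have hlog := Real.hasDerivAt_log hx.ne'
  have hu : HasDerivAt (fun u : ℝ => b * u) b x := by
    simpa using (hasDerivAt_id x).const_mul b
  refine (((hlog.const_mul d).sub (hu.mul hlog)).add (hu.mul_const γ)).congr_deriv ?_
  rw [mul_assoc, mul_inv_cancel₀ hx.ne', div_eq_mul_inv]
  ring

theorem stmt_13_general {N : ℕ} (d γ : Fin N → ℝ) (b : ℝ)
    (L : (Fin N → ℝ) → ℝ)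
    (hL : ∀ θ, L θ =
      ∑ i, (d i * Real.log (θ i) - b * θ i * Real.log (θ i) + b * θ i * γ i))
    (θs : Fin N → ℝ) (hθ_pos : ∀ i, 0 < θs i) (hθ_sum : ∑ i, θs i = 1)
    (hmax : IsLocalMaxOn L {θ : Fin N → ℝ | ∑ i, θ i = 1} θs) :
    ∃ y : ℝ,
      (∀ i, d i * Real.exp (-(Real.log (θs i))) - b * Real.log (θs i) + b * γ i = y) ∧
      ∑ i, Real.exp (Real.log (θs i)) = 1 := by
  rw [show L = _ from funext hL] at hmax
  obtain ⟨y, hy⟩ := hmax.exists_eq_const_deriv_of_sum_eq_one hθ_sum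
    fun k => hasDerivAt_surrogate_term (d k) (γ k) b (hθ_pos k)
  refine ⟨y + b, fun i => ?_, by simpa only [Real.exp_log (hθ_pos _)] using hθ_sum⟩
  rw [Real.exp_neg, Real.exp_log (hθ_pos i), ← div_eq_mul_inv, ← hy i]
  ring

/-- A constrained local maximizer of the surrogate objective on the simplex satisfies,
    in log-parameters φ_i = log θ*_i, the stationarity system of Equation (9). -/
theorem stmt_13 {N : ℕ} (hN : 1 ≤ N) (d γ : Fin N → ℝ) (b : ℝ)
    (hd : ∀ i, 0 < d i) (hb : 0 < b)
    (L : (Fin N → ℝ) → ℝ)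
    (hL : ∀ θ, L θ =
      ∑ i, (d i * Real.log (θ i) - b * θ i * Real.log (θ i) + b * θ i * γ i))
    (θs : Fin N → ℝ) (hθ_pos : ∀ i, 0 < θs i) (hθ_sum : ∑ i, θs i = 1)
    (hmax : IsLocalMaxOn L {θ : Fin N → ℝ | ∑ i, θ i = 1} θs) :
    ∃ y : ℝ,
      (∀ i, d i * Real.exp (-(Real.log (θs i))) - b * Real.log (θs i) + b * γ i = y) ∧
      ∑ i, Real.exp (Real.log (θs i)) = 1 :=
  stmt_13_general d γ b L hL θs hθ_pos hθ_sum hmax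
end
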